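/- Let V be a finite-dimensional real vector space that is an internal direct sum V = P ⊕ Q of subspaces P and Q, where P and Q are orthogonal with respect to a given inner product. Suppose P is the space of polynomials of degree ≤ k on an interval [a,b] with k ≥ 1 and a < b. Then any v ∈ V is uniquely determined by the data (v(a), v(b), Π v), where Π is the orthogonal projection onto the subspace P_{k−2} ⊕ Q (polynomials of degree ≤ k−2 plus Q). That is, if v, w ∈ V have v(a) = w(a), v(b) = w(b), and Π v = Π w, then v = w. -/
import Mathlib

open intervalIntegral MeasureTheory Polynomial

lemma aux_zero_of_nonneg {a b : ℝ} (hab : a < b) {f : ℝ → ℝ}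
    (hf : ContinuousOn f (Set.Icc a b)) (hnn : ∀ x ∈ Set.Icc a b, 0 ≤ f x)
    (hi : ∫ x in a..b, f x = 0) : ∀ x ∈ Set.Icc a b, f x = 0 := by
  intro x0 hx0
  by_contra hne
  have hpos : 0 < f x0 := lt_of_le_of_ne (hnn x0 hx0) (Ne.symm hne)
  have hcw : ContinuousWithinAt f (Set.Icc a b) x0 := hf x0 hx0
  rw [Metric.continuousWithinAt_iff] at hcw
  obtain ⟨δ, hδ, hδ'⟩ := hcw (f x0 / 2) (by linarith)
  set c := max a (x0 - δ / 2) with hc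
  set d := min b (x0 + δ / 2) with hd
  have hax : a ≤ x0 := hx0.1
  have hxb : x0 ≤ b := hx0.2
  have hac : a ≤ c := le_max_left _ _
  have hdb : d ≤ b := min_le_left _ _
  have hcd : c < d := by
    apply max_lt <;> apply lt_min <;> linarith
  have hlow : ∀ y ∈ Set.Ioo c d, 0 < f y := by
    intro y hy
    have h1 : x0 - δ / 2 ≤ c := le_max_right _ _
    have h2 : d ≤ x0 + δ / 2 := min_le_right _ _
    have hy1 : y ∈ Set.Icc a b := ⟨hac.trans hy.1.le, hy.2.le.trans hdb⟩
    have hdist : dist y x0 < δ := by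
      rw [Real.dist_eq, abs_lt]
      constructor
      · linarith [hy.1, h1]
      · linarith [hy.2, h2]
    have := hδ' hy1 hdist
    rw [Real.dist_eq, abs_lt] at this
    linarith [this.1]
  have hint : ∀ u v : ℝ, a ≤ u → u ≤ v → v ≤ b → IntervalIntegrable f volume u v := by
    intro u v hu huv hv
    apply ContinuousOn.intervalIntegrable
    apply hf.mono
    rw [Set.uIcc_of_le huv]
    exact Set.Icc_subset_Icc hu hv
  have h1 : (∫ x in a..c, f x) + ∫ x in c..d, f x = ∫ x in a..d, f x :=
    integral_add_adjacent_intervals (hint a c le_rfl hac (hcd.le.trans hdb))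
      (hint c d hac hcd.le hdb)
  have h2 : (∫ x in a..d, f x) + ∫ x in d..b, f x = ∫ x in a..b, f x :=
    integral_add_adjacent_intervals (hint a d le_rfl (hac.trans hcd.le) hdb)
      (hint d b (hac.trans hcd.le) hdb le_rfl)
  have hn1 : 0 ≤ ∫ x in a..c, f x :=
    integral_nonneg hac fun u hu => hnn u ⟨hu.1, hu.2.trans (hcd.le.trans hdb)⟩
  have hn2 : 0 ≤ ∫ x in d..b, f x :=
    integral_nonneg hdb fun u hu => hnn u ⟨(hac.trans hcd.le).trans hu.1, hu.2⟩
  have hmid : 0 < ∫ x in c..d, f x :=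
    intervalIntegral_pos_of_pos_on (hint c d hac hcd.le hdb) hlow hcd
  linarith

/-- The linear map sending a polynomial to its evaluation function. -/
noncomputable def evalMap : Polynomial ℝ →ₗ[ℝ] (ℝ → ℝ) where
  toFun p := fun x => p.eval x
  map_add' p q := by funext x; simp
  map_smul' c p := by funext x; simp

/-- Unisolvence of the boundary degrees of freedom (Lemma 3.2): an element of
`P_k ⊕ Q` on `[a,b]` (with `Q` L²-orthogonal to the polynomials of degree `≤ k`)
is uniquely determined by its endpoint values and its L²-orthogonal projection onto
`P_{k-2} ⊕ Q`. -/
theorem stmt3 (a b : ℝ) (hab : a < b) (k : ℕ) (hk : 1 ≤ k)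
    (Q : Submodule ℝ (ℝ → ℝ)) [FiniteDimensional ℝ Q]
    (hQcont : ∀ f ∈ Q, ContinuousOn f (Set.Icc a b))
    (horth : ∀ p ∈ (Polynomial.degreeLE ℝ (k : WithBot ℕ)).map evalMap, ∀ q ∈ Q,
      ∫ x in a..b, p x * q x = 0)
    (proj : (ℝ → ℝ) → (ℝ → ℝ))
    (hmem : ∀ v, proj v ∈ (Polynomial.degreeLE ℝ ((k - 2 : ℕ) : WithBot ℕ)).map evalMap ⊔ Q)
    (horthproj : ∀ v ∈ (Polynomial.degreeLE ℝ (k : WithBot ℕ)).map evalMap ⊔ Q,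
      ∀ s ∈ (Polynomial.degreeLE ℝ ((k - 2 : ℕ) : WithBot ℕ)).map evalMap ⊔ Q,
      ∫ x in a..b, (v x - proj v x) * s x = 0)
    (v w : ℝ → ℝ)
    (hv : v ∈ (Polynomial.degreeLE ℝ (k : WithBot ℕ)).map evalMap ⊔ Q)
    (hw : w ∈ (Polynomial.degreeLE ℝ (k : WithBot ℕ)).map evalMap ⊔ Q)
    (hva : v a = w a) (hvb : v b = w b) (hproj : proj v = proj w) :
    ∀ x ∈ Set.Icc a b, v x = w x := by
  classical
  -- decompositions
  obtain ⟨pv, hpv, qv, hqv, hveq⟩ := Submodule.mem_sup.1 hv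
  obtain ⟨pw, hpw, qw, hqw, hweq⟩ := Submodule.mem_sup.1 hw
  obtain ⟨Pv, hPv, rfl⟩ := Submodule.mem_map.1 hpv
  obtain ⟨Pw, hPw, rfl⟩ := Submodule.mem_map.1 hpw
  set Pu : Polynomial ℝ := Pv - Pw with hPu
  set qu : ℝ → ℝ := qv - qw with hqu
  have hquQ : qu ∈ Q := Q.sub_mem hqv hqw
  have huv : ∀ y, v y - w y = Pu.eval y + qu y := by
    intro y
    have h1 : v y = Pv.eval y + qv y := (congrFun hveq y).symm
    have h2 : w y = Pw.eval y + qw y := (congrFun hweq y).symm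
    simp only [hPu, hqu, Polynomial.eval_sub, Pi.sub_apply, h1, h2]
    ring
  -- continuity of members of the sums
  have hcontmem : ∀ (n : WithBot ℕ), ∀ f ∈ (Polynomial.degreeLE ℝ n).map evalMap ⊔ Q,
      ContinuousOn f (Set.Icc a b) := by
    intro n f hf
    obtain ⟨p, hp, q, hq, rfl⟩ := Submodule.mem_sup.1 hf
    obtain ⟨P, hP, rfl⟩ := Submodule.mem_map.1 hp
    exact ContinuousOn.add ((Polynomial.continuous P).continuousOn) (hQcont q hq)
  have hquCont : ContinuousOn qu (Set.Icc a b) := hQcont qu hquQ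
  have hInt : ∀ f g : ℝ → ℝ, ContinuousOn f (Set.Icc a b) → ContinuousOn g (Set.Icc a b) →
      IntervalIntegrable (fun x => f x * g x) volume a b := by
    intro f g hf hg
    apply ContinuousOn.intervalIntegrable
    rw [Set.uIcc_of_le hab.le]
    exact hf.mul hg
  -- the key orthogonality of v - w against P_{k-2} ⊔ Q
  have hkey : ∀ s ∈ (Polynomial.degreeLE ℝ ((k - 2 : ℕ) : WithBot ℕ)).map evalMap ⊔ Q,
      ∫ x in a..b, (v x - w x) * s x = 0 := by
    intro s hs
    have h1 := horthproj v hv s hs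
    have h2 := horthproj w hw s hs
    rw [hproj] at h1
    have hcs : ContinuousOn s (Set.Icc a b) := hcontmem _ s hs
    have hcv : ContinuousOn v (Set.Icc a b) := hcontmem _ v hv
    have hcw' : ContinuousOn w (Set.Icc a b) := hcontmem _ w hw
    have hcp : ContinuousOn (proj w) (Set.Icc a b) := hcontmem _ _ (hmem w)
    have e1 : IntervalIntegrable (fun x => (v x - proj w x) * s x) volume a b :=
      hInt _ _ (hcv.sub hcp) hcs
    have e2 : IntervalIntegrable (fun x => (w x - proj w x) * s x) volume a b :=
      hInt _ _ (hcw'.sub hcp) hcs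
    have hfun : (fun x => (v x - w x) * s x)
        = fun x => (v x - proj w x) * s x - (w x - proj w x) * s x := by
      funext y; ring
    rw [hfun, intervalIntegral.integral_sub e1 e2, h1, h2, sub_zero]
  -- Step 1: qu vanishes on [a,b]
  have hPuk : evalMap Pu ∈ (Polynomial.degreeLE ℝ (k : WithBot ℕ)).map evalMap :=
    Submodule.mem_map_of_mem ((Polynomial.degreeLE ℝ (k : WithBot ℕ)).sub_mem hPv hPw)
  have hqu0 : ∀ x ∈ Set.Icc a b, qu x = 0 := by
    have h0 := hkey qu (Submodule.mem_sup_right hquQ)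
    have h1 := horth _ hPuk qu hquQ
    have hrw : (fun x => (v x - w x) * qu x)
        = fun x => (evalMap Pu) x * qu x + qu x * qu x := by
      funext y
      have := huv y
      show (v y - w y) * qu y = Pu.eval y * qu y + qu y * qu y
      rw [this]; ring
    have hPuCont : ContinuousOn (evalMap Pu) (Set.Icc a b) :=
      (Polynomial.continuous Pu).continuousOn
    have iA : IntervalIntegrable (fun x => (evalMap Pu) x * qu x) volume a b :=
      hInt _ _ hPuCont hquCont
    have iB : IntervalIntegrable (fun x => qu x * qu x) volume a b :=
      hInt _ _ hquCont hquCont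
    rw [hrw, intervalIntegral.integral_add iA iB] at h0
    have h1' : (∫ x in a..b, (evalMap Pu) x * qu x) = 0 := h1
    have hsq : (∫ x in a..b, qu x * qu x) = 0 := by linarith
    intro x hx
    have := aux_zero_of_nonneg hab (hquCont.mul hquCont)
      (fun y _ => mul_self_nonneg (qu y)) hsq x hx
    exact mul_self_eq_zero.1 this
  -- Step 2: Pu has roots at a and b
  have hua : Pu.eval a = 0 := by
    have := huv a
    rw [hva, sub_self, hqu0 a ⟨le_rfl, hab.le⟩, add_zero] at this
    exact this.symm
  have hub : Pu.eval b = 0 := by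
    have := huv b
    rw [hvb, sub_self, hqu0 b ⟨hab.le, le_rfl⟩, add_zero] at this
    exact this.symm
  -- Step 3: Pu = 0
  have hPu0 : Pu = 0 := by
    by_contra hPu0
    have hda : (X - C a) ∣ Pu := dvd_iff_isRoot.2 hua
    have hdbv : (X - C b) ∣ Pu := dvd_iff_isRoot.2 hub
    have hcop : IsCoprime (X - C a) (X - C b) :=
      isCoprime_X_sub_C_of_isUnit_sub (isUnit_iff_ne_zero.2 (sub_ne_zero_of_ne hab.ne))
    obtain ⟨r, hr⟩ := hcop.mul_dvd hda hdbv
    have hrne : r ≠ 0 := by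
      rintro rfl
      rw [mul_zero] at hr
      exact hPu0 hr
    have hXa : (X - C a : Polynomial ℝ) ≠ 0 := X_sub_C_ne_zero a
    have hXb : (X - C b : Polynomial ℝ) ≠ 0 := X_sub_C_ne_zero b
    have hquad : ((X - C a) * (X - C b) : Polynomial ℝ).natDegree = 2 := by
      rw [Polynomial.natDegree_mul hXa hXb, natDegree_X_sub_C, natDegree_X_sub_C]
    have hPudeg : Pu.natDegree ≤ k :=
      Polynomial.natDegree_le_iff_degree_le.2 (Polynomial.mem_degreeLE.1
        ((Polynomial.degreeLE ℝ (k : WithBot ℕ)).sub_mem hPv hPw))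
    have hdeg : Pu.natDegree = 2 + r.natDegree := by
      rw [hr, Polynomial.natDegree_mul (mul_ne_zero hXa hXb) hrne, hquad]
    have hrk : r.natDegree ≤ k - 2 := by omega
    have hrmem : r ∈ Polynomial.degreeLE ℝ ((k - 2 : ℕ) : WithBot ℕ) :=
      Polynomial.mem_degreeLE.2 (Polynomial.natDegree_le_iff_degree_le.1 hrk)
    have hsmem : evalMap r ∈
        (Polynomial.degreeLE ℝ ((k - 2 : ℕ) : WithBot ℕ)).map evalMap ⊔ Q :=
      Submodule.mem_sup_left (Submodule.mem_map_of_mem hrmem)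
    have h0 := hkey _ hsmem
    set g : ℝ → ℝ := fun x => (x - a) * (b - x) * (r.eval x * r.eval x) with hg
    have hgint : (∫ x in a..b, g x) = 0 := by
      have hcongr : Set.EqOn g (fun x => -((v x - w x) * (evalMap r) x)) (Set.uIcc a b) := by
        intro y hy
        rw [Set.uIcc_of_le hab.le] at hy
        have hq := hqu0 y hy
        have hu := huv y
        have hPe : Pu.eval y = (y - a) * (y - b) * r.eval y := by
          rw [hr]; simp
        show (y - a) * (b - y) * (r.eval y * r.eval y) = -((v y - w y) * r.eval y)
        rw [hu, hq, add_zero, hPe]; ring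
      rw [intervalIntegral.integral_congr hcongr, intervalIntegral.integral_neg, h0, neg_zero]
    have hgnn : ∀ y ∈ Set.Icc a b, 0 ≤ g y := by
      intro y hy
      have : (0:ℝ) ≤ (y - a) * (b - y) :=
        mul_nonneg (by linarith [hy.1]) (by linarith [hy.2])
      exact mul_nonneg this (mul_self_nonneg _)
    have hgcont : ContinuousOn g (Set.Icc a b) :=
      (((continuous_id.sub continuous_const).mul (continuous_const.sub continuous_id)).mul
        ((Polynomial.continuous r).mul (Polynomial.continuous r))).continuousOn
    have hgz := aux_zero_of_nonneg hab hgcont hgnn hgint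
    have hroots : Set.Ioo a b ⊆ {x | r.IsRoot x} := by
      intro y hy
      have hzy := hgz y ⟨hy.1.le, hy.2.le⟩
      have hpos : 0 < (y - a) * (b - y) :=
        mul_pos (by linarith [hy.1]) (by linarith [hy.2])
      have : r.eval y * r.eval y = 0 := by
        rcases mul_eq_zero.1 hzy with h | h
        · exact absurd h hpos.ne'
        · exact h
      exact mul_self_eq_zero.1 this
    have : r = 0 := Polynomial.eq_zero_of_infinite_isRoot r
      ((Set.Ioo_infinite hab).mono hroots)
    rw [this, mul_zero] at hr
    exact hPu0 hr
  -- conclude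
  intro x hx
  have := huv x
  rw [hPu0, Polynomial.eval_zero, zero_add, hqu0 x hx] at this
  linarith
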